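/- The supremum of d(X,Y) over all pairs X, Y of D×D positive semi-definite trace-one matrices equals 1 (for D ≥ 2); moreover if X is positive definite and Y positive semi-definite with trace 1, then d(X,Y) = 1 if and only if Y is not positive definite. -/

import Mathlib

open Matrix
open scoped ComplexOrder

/-- `m(X,Y) = sup {λ : X - λY ⪰ 0}`. -/
noncomputable def mfun {D : ℕ} (X Y : Matrix (Fin D) (Fin D) ℂ) : ℝ :=
  sSup {l : ℝ | (X - l • Y).PosSemidef}

/-- The projective metric `d(X,Y) = (1 - m(X,Y)m(Y,X))/(1 + m(X,Y)m(Y,X))`. -/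
noncomputable def dfun {D : ℕ} (X Y : Matrix (Fin D) (Fin D) ℂ) : ℝ :=
  (1 - mfun X Y * mfun Y X) / (1 + mfun X Y * mfun Y X)

/-!
In the Loewner order, `λ • Y ≤ X` with `tr Y = 1` forces `λ ≤ re (tr X)`, so `m(X,Y)` is a genuine
supremum, `m ≥ 0` on positive semidefinite matrices and `d ≤ 1`. A positive definite `X` dominates
`c • 1` for some `c > 0`, while a positive semidefinite `Y` lies below `(tr Y) • 1`; hence
`m(X,Y) > 0`, and `d(X,Y) < 1` when both are positive definite. If instead `Y` is singular, a
positive `λ` with `λ • X ≤ Y` would make `Y` definite, so `m(Y,X) = 0` and `d(X,Y) = 1`. The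
normalised identity and a rank-one diagonal projection (which needs `D ≥ 2`) attain the value `1`.
-/

namespace Matrix

open scoped MatrixOrder

variable {𝕜 n : Type*} [RCLike 𝕜]

lemma PosDef.of_smul_le {X Y : Matrix n n 𝕜} (hX : X.PosDef) {l : ℝ} (hl : 0 < l)
    (h : l • X ≤ Y) : Y.PosDef := by
  simpa using PosDef.posSemidef_add (le_iff.mp h) (hX.smul hl)

variable [Fintype n]

lemma le_re_trace_of_smul_le {X Y : Matrix n n 𝕜} (hY : Y.trace = 1) {l : ℝ} (h : l • Y ≤ X) :
    l ≤ RCLike.re X.trace := by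
  have := (RCLike.nonneg_iff.mp (le_iff.mp h).trace_nonneg).1
  simpa [trace_sub, trace_smul, hY, RCLike.smul_re] using this

variable [DecidableEq n]

lemma PosSemidef.le_re_trace_smul_one {B : Matrix n n 𝕜} (hB : B.PosSemidef) :
    B ≤ RCLike.re B.trace • (1 : Matrix n n 𝕜) := by
  rw [← Algebra.algebraMap_eq_smul_one, le_algebraMap_iff_spectrum_le hB.1,
    hB.1.spectrum_real_eq_range_eigenvalues]
  rintro _ ⟨i, rfl⟩
  rw [hB.1.trace_eq_sum_eigenvalues, map_sum]
  simp only [RCLike.ofReal_re]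
  exact Finset.single_le_sum (fun j _ => hB.eigenvalues_nonneg j) (Finset.mem_univ i)

lemma PosDef.exists_pos_smul_one_le {A : Matrix n n 𝕜} (hA : A.PosDef) :
    ∃ c : ℝ, 0 < c ∧ c • (1 : Matrix n n 𝕜) ≤ A := by
  cases isEmpty_or_nonempty n
  · exact ⟨1, one_pos, le_of_eq (Subsingleton.elim _ _)⟩
  obtain ⟨c, hc, hcA⟩ := (CFC.exists_pos_algebraMap_le_iff hA.1).2
    fun x hx => hA.isStrictlyPositive.spectrum_pos hx
  exact ⟨c, hc, by rwa [← Algebra.algebraMap_eq_smul_one]⟩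

lemma PosDef.exists_pos_smul_le {A B : Matrix n n 𝕜} (hA : A.PosDef) (hB : B.PosSemidef) :
    ∃ r : ℝ, 0 < r ∧ r • B ≤ A := by
  obtain ⟨c, hc, hcA⟩ := hA.exists_pos_smul_one_le
  set t := RCLike.re B.trace
  have ht : 0 ≤ t := (RCLike.nonneg_iff.mp hB.trace_nonneg).1
  refine ⟨c / (t + 1), by positivity, ?_⟩
  calc (c / (t + 1)) • B ≤ (c / (t + 1)) • t • (1 : Matrix n n 𝕜) := by
        rw [le_iff, ← smul_sub]
        exact hB.le_re_trace_smul_one.smul (by positivity)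
    _ ≤ c • 1 := by
        rw [le_iff, smul_smul, ← sub_smul]
        refine PosSemidef.one.smul (sub_nonneg.2 ?_)
        rw [div_mul_eq_mul_div, div_le_iff₀ (by positivity)]
        nlinarith
    _ ≤ A := hcA

lemma exists_posDef_trace_eq_one [Nonempty n] : ∃ X : Matrix n n 𝕜, X.PosDef ∧ X.trace = 1 := by
  refine ⟨diagonal fun _ => (Fintype.card n : 𝕜)⁻¹, posDef_diagonal_iff.2 fun _ => ?_, ?_⟩
  · exact inv_pos.2 (Nat.cast_pos.2 Fintype.card_pos)
  · simp [trace_diagonal]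

lemma exists_posSemidef_not_posDef_trace_eq_one [Nontrivial n] :
    ∃ Y : Matrix n n 𝕜, Y.PosSemidef ∧ Y.trace = 1 ∧ ¬ Y.PosDef := by
  obtain ⟨i, j, hij⟩ := exists_pair_ne n
  refine ⟨diagonal (Pi.single i 1), posSemidef_diagonal_iff.2 fun k => ?_, by simp [trace_diagonal],
    fun h => by simpa [Pi.single_apply, hij.symm] using posDef_diagonal_iff.1 h j⟩
  rcases eq_or_ne k i with rfl | hk <;> simp [*]

end Matrix

open scoped MatrixOrder

section ProjectiveMetric

variable {D : ℕ} {X Y : Matrix (Fin D) (Fin D) ℂ}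

lemma bddAbove_posSemidef_sub_smul (hY : Y.trace = 1) :
    BddAbove {l : ℝ | (X - l • Y).PosSemidef} :=
  ⟨X.trace.re, fun _ hl => le_re_trace_of_smul_le hY hl⟩

lemma mfun_nonneg (hX : X.PosSemidef) (hY : Y.trace = 1) : 0 ≤ mfun X Y :=
  le_csSup (bddAbove_posSemidef_sub_smul hY) (by simpa using hX)

lemma mfun_pos (hX : X.PosDef) (hY : Y.PosSemidef) (hYt : Y.trace = 1) : 0 < mfun X Y := by
  obtain ⟨r, hr, hrY⟩ := hX.exists_pos_smul_le hY
  exact hr.trans_le (le_csSup (bddAbove_posSemidef_sub_smul hYt) hrY)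

lemma mfun_eq_zero_of_not_posDef (hX : X.PosDef) (hY : Y.PosSemidef) (hY' : ¬ Y.PosDef) :
    mfun Y X = 0 := by
  refine IsGreatest.csSup_eq ⟨by simpa using hY, fun l hl => ?_⟩
  by_contra! hl0
  exact hY' (hX.of_smul_le hl0 hl)

lemma mfun_mul_mfun_nonneg (hX : X.PosSemidef) (hXt : X.trace = 1) (hY : Y.PosSemidef)
    (hYt : Y.trace = 1) : 0 ≤ mfun X Y * mfun Y X :=
  mul_nonneg (mfun_nonneg hX hYt) (mfun_nonneg hY hXt)

lemma dfun_le_one (hX : X.PosSemidef) (hXt : X.trace = 1) (hY : Y.PosSemidef)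
    (hYt : Y.trace = 1) : dfun X Y ≤ 1 := by
  have := mfun_mul_mfun_nonneg hX hXt hY hYt
  rw [dfun, div_le_one (by linarith)]
  linarith

lemma dfun_eq_one_iff (hX : X.PosSemidef) (hXt : X.trace = 1) (hY : Y.PosSemidef)
    (hYt : Y.trace = 1) : dfun X Y = 1 ↔ mfun X Y * mfun Y X = 0 := by
  have := mfun_mul_mfun_nonneg hX hXt hY hYt
  rw [dfun, div_eq_one_iff_eq (by linarith)]
  constructor <;> intro h <;> linarith

lemma dfun_eq_one_iff_not_posDef (hX : X.PosDef) (hXt : X.trace = 1) (hY : Y.PosSemidef)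
    (hYt : Y.trace = 1) : dfun X Y = 1 ↔ ¬ Y.PosDef := by
  rw [dfun_eq_one_iff hX.posSemidef hXt hY hYt]
  constructor
  · intro h hY'
    exact (mul_pos (mfun_pos hX hY hYt) (mfun_pos hY' hX.posSemidef hXt)).ne' h
  · intro hY'
    rw [mfun_eq_zero_of_not_posDef hX hY hY', mul_zero]

end ProjectiveMetric

theorem stmt8 {D : ℕ} (hD : 2 ≤ D) :
    (sSup {r : ℝ | ∃ X Y : Matrix (Fin D) (Fin D) ℂ, X.PosSemidef ∧ X.trace = 1 ∧
        Y.PosSemidef ∧ Y.trace = 1 ∧ r = dfun X Y} = 1) ∧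
    (∀ X Y : Matrix (Fin D) (Fin D) ℂ, X.PosDef → X.trace = 1 →
      Y.PosSemidef → Y.trace = 1 → (dfun X Y = 1 ↔ ¬ Y.PosDef)) := by
  refine ⟨?_, fun X Y hX hXt hY hYt => dfun_eq_one_iff_not_posDef hX hXt hY hYt⟩
  have : Nontrivial (Fin D) := Fin.nontrivial_iff_two_le.2 hD
  obtain ⟨X, hX, hXt⟩ := exists_posDef_trace_eq_one (𝕜 := ℂ) (n := Fin D)
  obtain ⟨Y, hY, hYt, hY'⟩ := exists_posSemidef_not_posDef_trace_eq_one (𝕜 := ℂ) (n := Fin D)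
  refine IsGreatest.csSup_eq ⟨⟨X, Y, hX.posSemidef, hXt, hY, hYt,
    ((dfun_eq_one_iff_not_posDef hX hXt hY hYt).2 hY').symm⟩, ?_⟩
  rintro _ ⟨X, Y, hX, hXt, hY, hYt, rfl⟩
  exact dfun_le_one hX hXt hY hYt
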